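/- arXiv:2509.20794 — 2 statements merged into one kernel-verified Lean document; each statement's English description precedes it below -/
import Mathlib

section
/- Let C be a linear code of length n over a finite commutative Frobenius ring R, and let F = (F_0, F_1, …, F_t) be a tuple of non-empty subsets of {0, 1, …, t}. Let P^F be the (t+1)×(t+1) matrix with (i,j) entry equal to 1 if j ∈ F_i and 0 otherwise. Then, as an identity of polynomials in y_0, …, y_t, swe_C(P^F y) = Σ_{X ⊆ t·[n]} B^F_C(X) · y_0^{|M_0(X)|} y_1^{|M_1(X)|} ⋯ y_t^{|M_t(X)|}, where the sum runs over all submultisets X of t·[n]. -/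
noncomputable section
open scoped BigOperators

/-- The dual of a linear code `C ⊆ Rⁿ` with respect to the standard inner
product `u·v = ∑ ℓ, u ℓ * v ℓ`. -/
def dualCode {R : Type*} [CommRing R] {n : ℕ} (C : Submodule R (Fin n → R)) :
    Submodule R (Fin n → R) where
  carrier := {v | ∀ u ∈ C, ∑ ℓ, u ℓ * v ℓ = 0}
  add_mem' := by
    intro v w hv hw u hu
    simp only [Set.mem_setOf_eq] at *
    have h1 := hv u hu
    have h2 := hw u hu
    simp only [Pi.add_apply, mul_add, Finset.sum_add_distrib, h1, h2, add_zero]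
  zero_mem' := by
    intro u hu
    simp
  smul_mem' := by
    intro c v hv u hu
    simp only [Set.mem_setOf_eq] at *
    have h := hv u hu
    have : ∑ ℓ, u ℓ * (c • v) ℓ = c * ∑ ℓ, u ℓ * v ℓ := by
      rw [Finset.mul_sum]
      exact Finset.sum_congr rfl fun ℓ _ => by
        simp only [Pi.smul_apply, smul_eq_mul]; ring
    rw [this, h, mul_zero]

/-- A finite commutative ring is Frobenius iff `|C|·|C⊥| = |R|ⁿ` for every
linear code `C` of every length `n` over `R`. -/
def IsFrobeniusRing (R : Type*) [CommRing R] [Fintype R] : Prop :=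
  ∀ (n : ℕ) (C : Submodule R (Fin n → R)),
    Nat.card C * Nat.card (dualCode C) = Fintype.card R ^ n

open MvPolynomial Classical

/-- The symmetrized weight composition `swc_i(c) = |{ℓ : c_ℓ R = a_i R}|`. -/
def swc {R : Type*} [CommRing R] {t n : ℕ} (a : Fin (t + 1) → R)
    (c : Fin n → R) (i : Fin (t + 1)) : ℕ :=
  Nat.card {ℓ : Fin n // Ideal.span {c ℓ} = Ideal.span {a i}}

/-- The symmetrized weight enumerator
`swe_C(x₀, …, x_t) = ∑_{c ∈ C} ∏ᵢ xᵢ^(swcᵢ(c))`. -/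
def swe {R : Type*} [CommRing R] [Fintype R] {t n : ℕ} (a : Fin (t + 1) → R)
    (C : Submodule R (Fin n → R)) : MvPolynomial (Fin (t + 1)) ℚ :=
  haveI : Fintype C := Fintype.ofFinite C
  ∑ c : C, ∏ i, X i ^ swc a (c : Fin n → R) i

/-- For a tuple `F = (F₀, …, F_t)` of subsets of `{0, …, t}` and a submultiset
`X ⊆ t·[n]` (identified with its multiplicity function `m : [n] → {0, …, t}`),
`B^F_C(X) = |{c ∈ C : S_i(c) ⊆ ∪_{j ∈ F_i} M_j(X) for all i}|`. -/
def BF {R : Type*} [CommRing R] {t n : ℕ} (a : Fin (t + 1) → R)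
    (C : Submodule R (Fin n → R)) (F : Fin (t + 1) → Set (Fin (t + 1)))
    (m : Fin n → Fin (t + 1)) : ℕ :=
  Nat.card {c : C // ∀ (i : Fin (t + 1)) (ℓ : Fin n),
    Ideal.span {(c : Fin n → R) ℓ} = Ideal.span {a i} → m ℓ ∈ F i}

/-!
Let `κ r` be the index `i` with `rR = a_i R`. The monomial of a codeword `c` is
`∏_ℓ x_{κ(c_ℓ)}`, so substituting `x_i ↦ ∑_{j ∈ F_i} y_j` and expanding the product over the
coordinates gives `∑_m [m_ℓ ∈ F_{κ(c_ℓ)} for all ℓ] ∏_ℓ y_{m_ℓ}`, the sum running over all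
multiplicity functions `m`. Summing over `c ∈ C` and exchanging the two sums, the coefficient of
`∏_ℓ y_{m_ℓ}` counts exactly the codewords defining `B^F_C(m)`.
-/

open Finset

lemma exists_index_of_forall_exists_eq {α β ι : Type*} {g : α → β} {h : ι → β}
    (hrep : ∀ r, ∃ i, g r = h i) (hinj : Function.Injective h) :
    ∃ κ : α → ι, ∀ r i, g r = h i ↔ κ r = i :=
  ⟨fun r => (hrep r).choose, fun r _ =>
    ⟨fun hri => hinj ((hrep r).choose_spec.symm.trans hri), fun hri => hri ▸ (hrep r).choose_spec⟩⟩

section Substitution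

variable {ι κ μ : Type*} [Fintype ι] [Fintype κ] [Fintype μ]

lemma prod_pow_card_fiber {M : Type*} [CommMonoid M] (f : ι → κ) (g : κ → M) :
    ∏ i, g i ^ Nat.card {ℓ // f ℓ = i} = ∏ ℓ, g (f ℓ) := by
  rw [← Fintype.prod_fiberwise' f g]
  simp only [prod_const, card_univ, Nat.card_eq_fintype_card]

lemma bind₁_prod_pow_card_fiber {S : Type*} [CommSemiring S] [DecidableEq ι]
    (P : Matrix κ μ S) (f : ι → κ) :
    bind₁ (fun i => ∑ j, C (P i j) * X j) (∏ i, X i ^ Nat.card {ℓ // f ℓ = i}) =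
      ∑ m : ι → μ, C (∏ ℓ, P (f ℓ) (m ℓ)) * ∏ ℓ, X (m ℓ) := by
  simp only [map_prod, map_pow, bind₁_X_right]
  rw [prod_pow_card_fiber f (fun i => ∑ j, C (P i j) * X j), Fintype.prod_sum]
  simp only [prod_mul_distrib]

end Substitution

theorem stmt5_general {R : Type*} [CommRing R] [Fintype R]
    {t : ℕ} (a : Fin (t + 1) → R)
    (hrep : ∀ r : R, ∃ i, Ideal.span {r} = Ideal.span {a i})
    (hinj : ∀ i j, Ideal.span {a i} = Ideal.span {a j} → i = j)
    {n : ℕ} (C : Submodule R (Fin n → R))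
    (F : Fin (t + 1) → Set (Fin (t + 1)))
    (P : Matrix (Fin (t + 1)) (Fin (t + 1)) ℚ)
    (hP : ∀ i j, P i j = if j ∈ F i then 1 else 0) :
    (MvPolynomial.bind₁ (fun i : Fin (t + 1) =>
        ∑ j : Fin (t + 1), MvPolynomial.C (P i j) * X j)) (swe a C) =
      ∑ m : Fin n → Fin (t + 1),
        MvPolynomial.C ((BF a C F m : ℚ)) *
          ∏ i : Fin (t + 1), X i ^ (Nat.card {ℓ : Fin n // m ℓ = i}) := by
  let _ : Fintype C := Fintype.ofFinite C
  obtain ⟨κ, hκ⟩ := exists_index_of_forall_exists_eq hrep (fun i j => hinj i j)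
  have hswc : ∀ (c : Fin n → R) i, swc a c i = Nat.card {ℓ // κ (c ℓ) = i} := by
    simp only [swc, hκ, implies_true]
  have hPF : ∀ (c : Fin n → R) (m : Fin n → Fin (t + 1)),
      ∏ ℓ, P (κ (c ℓ)) (m ℓ) = if ∀ ℓ, m ℓ ∈ F (κ (c ℓ)) then 1 else 0 := by
    intro c m
    simp only [hP, Fintype.prod_boole]
    congr
  have hBF : ∀ m, (BF a C F m : ℚ) = ∑ c : C, if ∀ ℓ, m ℓ ∈ F (κ (c.1 ℓ)) then 1 else 0 := by
    intro m
    simp only [BF, hκ, forall_comm (α := Fin (t + 1)), forall_eq', sum_boole,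
      Nat.card_eq_fintype_card, Fintype.card_subtype]
  calc _ = ∑ c : C, ∑ m : Fin n → Fin (t + 1),
        MvPolynomial.C (if ∀ ℓ, m ℓ ∈ F (κ (c.1 ℓ)) then (1 : ℚ) else 0) * ∏ ℓ, X (m ℓ) := by
        simp only [swe, map_sum, hswc, bind₁_prod_pow_card_fiber, hPF]
    _ = ∑ m : Fin n → Fin (t + 1), MvPolynomial.C (BF a C F m : ℚ) * ∏ ℓ, X (m ℓ) := by
        rw [sum_comm]
        simp only [hBF, map_sum, sum_mul]
    _ = _ := by simp only [prod_pow_card_fiber]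

/-- for any tuple `F` of non-empty subsets of `{0, …, t}`,
`swe_C(P^F y) = ∑_{X ⊆ t·[n]} B^F_C(X) ∏ᵢ yᵢ^{|M_i(X)|}`. -/
theorem stmt5 {R : Type*} [CommRing R] [Fintype R] (hR : IsFrobeniusRing R)
    {t : ℕ} (a : Fin (t + 1) → R)
    (hrep : ∀ r : R, ∃ i, Ideal.span {r} = Ideal.span {a i})
    (hinj : ∀ i j, Ideal.span {a i} = Ideal.span {a j} → i = j)
    {n : ℕ} (C : Submodule R (Fin n → R))
    (F : Fin (t + 1) → Set (Fin (t + 1))) (hF : ∀ i, (F i).Nonempty)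
    (P : Matrix (Fin (t + 1)) (Fin (t + 1)) ℚ)
    (hP : ∀ i j, P i j = if j ∈ F i then 1 else 0) :
    (MvPolynomial.bind₁ (fun i : Fin (t + 1) =>
        ∑ j : Fin (t + 1), MvPolynomial.C (P i j) * X j)) (swe a C) =
      ∑ m : Fin n → Fin (t + 1),
        MvPolynomial.C ((BF a C F m : ℚ)) *
          ∏ i : Fin (t + 1), X i ^ (Nat.card {ℓ : Fin n // m ℓ = i}) :=
  stmt5_general a hrep hinj C F P hP

end
end

section
/- Let C be a linear code of length n over a finite commutative Frobenius ring R. Let A be the (t+1)×(t+1) 0–1 matrix with A_{ij} = 1 iff a_iR ⊆ a_jR, let D = diag(|a_0R|, |a_1R|, …, |a_tR|), and let Q be the (t+1)×(t+1) matrix with Q_{ij} = 0 if a_i ≠ 0 and a_kR ⊆ a_jR for some k with a_i a_k ≠ 0, and Q_{ij} = 1 otherwise. Then: (1) Q_{ij} = 1 if and only if a_jR ⊆ (a_iR)⊥ = {r ∈ R : a_i r = 0}; (2) Q is symmetric; and (3) swe_{C⊥}(x) = (1/|C|) · swe_C(Q D A^{−1} x), as an identity of polynomials in x_0, …, x_t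 (with A^{−1} the inverse of A over ℚ). -/
/-!
Expand `∏ ℓ ∑ j M_{i_ℓ j} x_j` over words `w : Fin n → Fin (t + 1)` and put
`J_w = ∏ ℓ a_{w ℓ} R`, whose dual is `∏ ℓ ann(a_{w ℓ} R)`. Since `Q_{ij} = 1` exactly when
`a_i a_j = 0`, the coefficient of `∏ ℓ x_{w ℓ}` is `|C| · |C⊥ ∩ J_w|` in `|C| · swe_{C⊥}(A x)`
and `|J_w| · |C ∩ J_w⊥|` in `swe_C(Q D x)`. These agree: the Frobenius
property `|E| · |E⊥| = |R|ⁿ` gives double duality, and together with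
`|C + J⊥| · |C ∩ J⊥| = |C| · |J⊥|` it yields `|C| · |C⊥ ∩ J| = |J| · |C ∩ J⊥|`.
Ordered by cardinality of the ideals, `A` is unitriangular, so substituting `A⁻¹` gives the
identity.
-/

noncomputable section
open scoped BigOperators

open MvPolynomial Classical

theorem Submodule.card_sup_mul_card_inf {R M : Type*} [Ring R] [AddCommGroup M] [Module R M]
    (p q : Submodule R M) :
    Nat.card ↥(p ⊔ q) * Nat.card ↥(p ⊓ q) = Nat.card p * Nat.card q := by
  let p' := comap p.subtype (p ⊓ q)
  let q' := comap (p ⊔ q).subtype q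
  have hp : Nat.card p = Nat.card (p ⧸ p') * Nat.card p' :=
    AddSubgroup.card_eq_card_quotient_mul_card_addSubgroup p'.toAddSubgroup
  have hpq : Nat.card ↥(p ⊔ q) = Nat.card (↥(p ⊔ q) ⧸ q') * Nat.card q' :=
    AddSubgroup.card_eq_card_quotient_mul_card_addSubgroup q'.toAddSubgroup
  have hp' : Nat.card p' = Nat.card ↥(p ⊓ q) :=
    Nat.card_congr (comapSubtypeEquivOfLe inf_le_left).toEquiv
  have hq' : Nat.card q' = Nat.card q := Nat.card_congr (comapSubtypeEquivOfLe le_sup_right).toEquiv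
  have hquot : Nat.card (p ⧸ p') = Nat.card (↥(p ⊔ q) ⧸ q') := by
    rw [← Nat.card_congr (LinearMap.quotientInfEquivSupQuotient p q).toEquiv, ← comap_inf]
  rw [hpq, hp, hp', hq', hquot]
  ring

theorem Matrix.det_eq_one_of_eq_ite_le {ι P α K : Type*} [Fintype ι] [DecidableEq ι]
    [PartialOrder P] [LinearOrder α] [CommRing K] {g : ι → P} (hg : Function.Injective g)
    {f : P → α} (hf : StrictMono f) {M : Matrix ι ι K}
    (hM : ∀ i j, M i j = if g i ≤ g j then 1 else 0) : M.det = 1 := by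
  have htri : M.BlockTriangular (f ∘ g) := fun i j hij => by
    rw [hM, if_neg fun hle => (hf.monotone hle).not_gt hij]
  rw [htri.det]
  refine Finset.prod_eq_one fun c _ => ?_
  suffices M.toSquareBlock (f ∘ g) c = 1 by rw [this, Matrix.det_one]
  ext ⟨i, hi⟩ ⟨j, hj⟩
  simp only [Matrix.toSquareBlock_def, Matrix.of_apply, hM, Matrix.one_apply, Subtype.mk.injEq]
  by_cases hij : i = j
  · simp [hij]
  · rw [if_neg hij, if_neg fun hle => hij (hg ((hle.lt_or_eq).resolve_left fun hlt =>
      (hf hlt).ne (hi.trans hj.symm)))]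

section DualCode

variable {R : Type*} [CommRing R] {n : ℕ}

theorem mem_dualCode {C : Submodule R (Fin n → R)} {v : Fin n → R} :
    v ∈ dualCode C ↔ ∀ u ∈ C, ∑ ℓ, u ℓ * v ℓ = 0 := Iff.rfl

theorem le_dualCode_dualCode (C : Submodule R (Fin n → R)) : C ≤ dualCode (dualCode C) :=
  fun u hu v hv => by simpa only [mul_comm] using hv u hu

theorem dualCode_sup (C C' : Submodule R (Fin n → R)) :
    dualCode (C ⊔ C') = dualCode C ⊓ dualCode C' := by
  ext v
  simp only [Submodule.mem_inf, mem_dualCode, Submodule.forall_mem_sup, Pi.add_apply, add_mul,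
    Finset.sum_add_distrib]
  exact ⟨fun h => ⟨fun u hu => by simpa using h u hu 0 (zero_mem _),
    fun u' hu' => by simpa using h 0 (zero_mem _) u' hu'⟩,
    fun ⟨h, h'⟩ u hu u' hu' => by rw [h u hu, h' u' hu', add_zero]⟩

theorem dualCode_pi_univ (I : Fin n → Ideal R) :
    dualCode (Submodule.pi Set.univ I) = Submodule.pi Set.univ fun ℓ => (I ℓ).annihilator := by
  ext v
  simp only [mem_dualCode, Submodule.mem_pi, Set.mem_univ, true_implies,
    Submodule.mem_annihilator, smul_eq_mul]
  constructor
  · intro h ℓ r hr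
    simpa [Pi.single_apply, mul_comm] using h (Pi.single ℓ r) fun ℓ' => by
      rcases eq_or_ne ℓ' ℓ with rfl | hne
      · simpa using hr
      · simp [hne]
  · exact fun h u hu =>
      Finset.sum_eq_zero fun ℓ _ => (mul_comm _ _).trans (h ℓ (u ℓ) (hu ℓ))

variable [Fintype R]

theorem dualCode_dualCode (hR : IsFrobeniusRing R) (C : Submodule R (Fin n → R)) :
    dualCode (dualCode C) = C := by
  have hcard : Nat.card (dualCode (dualCode C)) = Nat.card C :=
    Nat.eq_of_mul_eq_mul_left Nat.card_pos ((hR n _).trans ((hR n C).symm.trans (mul_comm _ _)))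
  exact (SetLike.coe_injective <| Set.Finite.eq_of_subset_of_card_le (Set.toFinite _)
    (le_dualCode_dualCode C) hcard.le).symm

theorem card_mul_card_dualCode_inf (hR : IsFrobeniusRing R) (C J : Submodule R (Fin n → R)) :
    Nat.card C * Nat.card ↥(dualCode C ⊓ J) = Nat.card J * Nat.card ↥(C ⊓ dualCode J) := by
  have hsup := hR n (C ⊔ dualCode J)
  rw [dualCode_sup, dualCode_dualCode hR] at hsup
  refine Nat.eq_of_mul_eq_mul_left (Nat.card_pos (α := dualCode J)) ?_
  calc Nat.card (dualCode J) * (Nat.card C * Nat.card ↥(dualCode C ⊓ J))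
      = Nat.card ↥(C ⊔ dualCode J) * Nat.card ↥(C ⊓ dualCode J) *
          Nat.card ↥(dualCode C ⊓ J) := by
        rw [Submodule.card_sup_mul_card_inf]; ring
    _ = Nat.card J * Nat.card (dualCode J) * Nat.card ↥(C ⊓ dualCode J) := by
        rw [hR n J, ← hsup]; ring
    _ = Nat.card (dualCode J) * (Nat.card J * Nat.card ↥(C ⊓ dualCode J)) := by ring

end DualCode

theorem Submodule.card_pi_univ {ι R : Type*} {φ : ι → Type*} [Fintype ι] [Semiring R]
    [∀ i, AddCommMonoid (φ i)] [∀ i, Module R (φ i)] (p : ∀ i, Submodule R (φ i)) :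
    Nat.card (Submodule.pi Set.univ p) = ∏ i, Nat.card (p i) := by
  rw [← Nat.card_pi]
  exact Nat.card_congr
    ⟨fun v i => ⟨v.1 i, v.2 i (Set.mem_univ i)⟩,
      fun f => ⟨fun i => f i, fun i _ => (f i).2⟩, fun _ => rfl, fun _ => rfl⟩

theorem Submodule.sum_ite_mem_eq_card_inf {R M S : Type*} [Semiring R] [AddCommMonoid M]
    [Module R M] [AddCommMonoidWithOne S] (E F : Submodule R M) [Fintype E] :
    ∑ v : E, (if (v : M) ∈ F then (1 : S) else 0) = Nat.card ↥(E ⊓ F) := by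
  let e : ↥(E ⊓ F) ≃ {v : E // (v : M) ∈ F} :=
    ⟨fun v => ⟨⟨v, v.2.1⟩, v.2.2⟩, fun v => ⟨v, v.1.2, v.2⟩,
      fun _ => rfl, fun _ => rfl⟩
  rw [Finset.sum_boole, Nat.card_congr e, Nat.card_eq_fintype_card, Fintype.card_subtype]

theorem Submodule.sum_prod_ite_mem_eq_card_inf_pi {ι R M S : Type*} [Fintype ι] [Semiring R]
    [AddCommMonoid M] [Module R M] [CommSemiring S] (E : Submodule R (ι → M)) [Fintype E]
    (K : ι → Submodule R M) :
    ∑ v : E, ∏ i, (if (v : ι → M) i ∈ K i then (1 : S) else 0) =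
      Nat.card ↥(E ⊓ Submodule.pi Set.univ K) := by
  simp only [Finset.prod_boole, Finset.mem_univ, true_implies]
  simpa only [Submodule.mem_pi, Set.mem_univ, true_implies] using
    Submodule.sum_ite_mem_eq_card_inf E (Submodule.pi Set.univ K)

theorem card_mul_sum_prod_ite_mem_dualCode {R : Type*} [CommRing R] [Fintype R] {n : ℕ}
    (hR : IsFrobeniusRing R) (C : Submodule R (Fin n → R)) [Fintype C] [Fintype (dualCode C)]
    (I : Fin n → Ideal R) :
    (Nat.card C : ℚ) *
        ∑ v : dualCode C, ∏ ℓ, (if (v : Fin n → R) ℓ ∈ I ℓ then 1 else 0) =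
      ∑ c : C, ∏ ℓ, (if (c : Fin n → R) ℓ ∈ (I ℓ).annihilator then 1 else 0) *
        (Nat.card (I ℓ) : ℚ) := by
  simp only [Finset.prod_mul_distrib, ← Finset.sum_mul,
    Submodule.sum_prod_ite_mem_eq_card_inf_pi, ← dualCode_pi_univ]
  rw [← Nat.cast_prod, ← Submodule.card_pi_univ, mul_comm _ (Nat.card (Submodule.pi _ I) : ℚ)]
  exact_mod_cast card_mul_card_dualCode_inf hR C _

section LinearSubst

variable {σ K : Type*} [Fintype σ] [CommSemiring K]

/-- The paper's `swe_C(M x)` is `linearSubst M (swe a C)`. -/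
def linearSubst (M : Matrix σ σ K) : MvPolynomial σ K →ₐ[K] MvPolynomial σ K :=
  bind₁ fun i => ∑ j, C (M i j) * X j

theorem linearSubst_X (M : Matrix σ σ K) (i : σ) :
    linearSubst M (X i) = ∑ j, C (M i j) * X j :=
  bind₁_X_right _ _

theorem linearSubst_one [DecidableEq σ] (p : MvPolynomial σ K) : linearSubst 1 p = p := by
  suffices linearSubst (1 : Matrix σ σ K) = AlgHom.id K _ from DFunLike.congr_fun this p
  refine algHom_ext fun i => ?_
  simp [linearSubst_X, Matrix.one_apply]

theorem linearSubst_linearSubst (M M' : Matrix σ σ K) (p : MvPolynomial σ K) :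
    linearSubst M (linearSubst M' p) = linearSubst (M' * M) p := by
  suffices (linearSubst M).comp (linearSubst M') = linearSubst (M' * M) from
    DFunLike.congr_fun this p
  refine algHom_ext fun i => ?_
  simp only [AlgHom.comp_apply, linearSubst_X, map_sum, map_mul, algHom_C, algebraMap_eq,
    Finset.mul_sum, Matrix.mul_apply, Finset.sum_mul]
  rw [Finset.sum_comm]
  simp only [← mul_assoc, ← C_mul]

theorem prod_sum_C_mul_X {ι : Type*} [Fintype ι] [DecidableEq ι] (g : ι → σ → K) :
    ∏ ℓ, ∑ j, C (g ℓ j) * X j =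
      ∑ w : ι → σ, C (∏ ℓ, g ℓ (w ℓ)) * ∏ ℓ, (X (w ℓ) : MvPolynomial σ K) := by
  rw [Finset.prod_univ_sum, Fintype.piFinset_univ]
  simp only [Finset.prod_mul_distrib, map_prod]

end LinearSubst

section PrincipalIdeals

variable {R : Type*} [CommRing R]

theorem forall_mem_span_singleton_mul_eq_zero_iff {x y : R} :
    (∀ r ∈ Ideal.span {y}, x * r = 0) ↔ x * y = 0 := by
  refine ⟨fun h => h y (Ideal.mem_span_singleton_self y), fun h r hr => ?_⟩
  obtain ⟨s, rfl⟩ := Ideal.mem_span_singleton'.1 hr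
  rw [mul_left_comm, h, mul_zero]

theorem mem_annihilator_span_singleton_iff {x y : R} :
    x ∈ (Ideal.span {y}).annihilator ↔ x * y = 0 :=
  Submodule.mem_annihilator.trans forall_mem_span_singleton_mul_eq_zero_iff

theorem mul_eq_zero_iff_of_span_singleton_eq {x y : R} (h : Ideal.span {x} = Ideal.span {y})
    (z : R) : x * z = 0 ↔ y * z = 0 := by
  suffices ∀ {x y : R}, Ideal.span {x} ≤ Ideal.span {y} → y * z = 0 → x * z = 0 from
    ⟨this h.ge, this h.le⟩
  intro x y hle hy
  obtain ⟨s, rfl⟩ := Ideal.span_singleton_le_span_singleton.1 hle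
  rw [mul_right_comm, hy, zero_mul]

theorem ne_zero_and_exists_mul_ne_zero_iff {ι : Type*} (a : ι → R) (x : R) (j : ι) :
    (x ≠ 0 ∧ ∃ k, x * a k ≠ 0 ∧ Ideal.span {a k} ≤ Ideal.span {a j}) ↔ x * a j ≠ 0 := by
  refine ⟨fun ⟨_, k, hk, hkj⟩ => ?_, fun h => ⟨left_ne_zero_of_mul h, j, h, le_rfl⟩⟩
  obtain ⟨s, hs⟩ := Ideal.span_singleton_le_span_singleton.1 hkj
  rw [hs, ← mul_assoc] at hk
  exact left_ne_zero_of_mul hk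

end PrincipalIdeals

section SymmetrizedWeightEnumerator

variable {R : Type*} [CommRing R] {t n : ℕ} (a : Fin (t + 1) → R)
  (hinj : ∀ i j, Ideal.span {a i} = Ideal.span {a j} → i = j)

include hinj in
theorem prod_pow_swc {M : Type*} [CommMonoid M] {κ : R → Fin (t + 1)}
    (hκ : ∀ r, Ideal.span {r} = Ideal.span {a (κ r)}) (y : Fin (t + 1) → M)
    (v : Fin n → R) :
    ∏ i, y i ^ swc a v i = ∏ ℓ, y (κ (v ℓ)) := by
  rw [← Fintype.prod_fiberwise' (fun ℓ => κ (v ℓ)) y]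
  refine Finset.prod_congr rfl fun i _ => ?_
  rw [Finset.prod_const, Finset.card_univ, swc, Nat.card_eq_fintype_card]
  exact congrArg _ (Fintype.card_congr (Equiv.subtypeEquivRight fun ℓ => by
    rw [hκ]
    exact ⟨hinj _ _, fun h => h ▸ rfl⟩))

variable [Fintype R]

include hinj in
theorem linearSubst_swe (hrep : ∀ r : R, ∃ i, Ideal.span {r} = Ideal.span {a i})
    (E : Submodule R (Fin n → R)) [Fintype E] (M : Matrix (Fin (t + 1)) (Fin (t + 1)) ℚ)
    (f : R → Fin (t + 1) → ℚ)
    (hM : ∀ r i, Ideal.span {r} = Ideal.span {a i} → ∀ j, M i j = f r j) :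
    linearSubst M (swe a E) =
      ∑ w : Fin n → Fin (t + 1),
        C (∑ c : E, ∏ ℓ, f ((c : Fin n → R) ℓ) (w ℓ)) * ∏ ℓ, X (w ℓ) := by
  choose κ hκ using hrep
  rw [swe, Subsingleton.elim (Fintype.ofFinite E) ‹_›]
  simp only [map_sum, map_prod, linearSubst_X, prod_pow_swc a hinj hκ,
    hM _ _ (hκ _), prod_sum_C_mul_X]
  rw [Finset.sum_comm]
  simp only [← Finset.sum_mul]

end SymmetrizedWeightEnumerator

theorem card_mul_linearSubst_swe_dualCode {R : Type*} [CommRing R] [Fintype R]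
    (hR : IsFrobeniusRing R) {t : ℕ} (a : Fin (t + 1) → R)
    (hrep : ∀ r : R, ∃ i, Ideal.span {r} = Ideal.span {a i})
    (hinj : ∀ i j, Ideal.span {a i} = Ideal.span {a j} → i = j)
    {n : ℕ} (C : Submodule R (Fin n → R)) (A D Q : Matrix (Fin (t + 1)) (Fin (t + 1)) ℚ)
    (hA : ∀ i j, A i j = if Ideal.span {a i} ≤ Ideal.span {a j} then 1 else 0)
    (hD : D = Matrix.diagonal fun i => (Nat.card (Ideal.span {a i}) : ℚ))
    (hQ : ∀ i j, Q i j = if a i * a j = 0 then 1 else 0) :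
    MvPolynomial.C (Nat.card C : ℚ) * linearSubst A (swe a (dualCode C)) =
      linearSubst (Q * D) (swe a C) := by
  rw [linearSubst_swe a hinj hrep (dualCode C) A
      (fun r j => if r ∈ Ideal.span {a j} then 1 else 0)
      fun r i hri j => by rw [hA, ← hri, Ideal.span_singleton_le_iff_mem],
    linearSubst_swe a hinj hrep C (Q * D)
      (fun r j => (if r ∈ (Ideal.span {a j}).annihilator then 1 else 0) *
        (Nat.card (Ideal.span {a j}) : ℚ))
      fun r i hri j => by
        rw [hD, Matrix.mul_diagonal, hQ, mem_annihilator_span_singleton_iff,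
          mul_eq_zero_iff_of_span_singleton_eq hri],
    Finset.mul_sum]
  refine Finset.sum_congr rfl fun w _ => ?_
  rw [← mul_assoc, ← map_mul,
    card_mul_sum_prod_ite_mem_dualCode hR C fun ℓ => Ideal.span {a (w ℓ)}]

/-- the main MacWilliams identity
`swe_{C⊥}(x) = (1/|C|) · swe_C(Q D A⁻¹ x)`, where `A` is the adjacency matrix
of the poset of principal ideals, `D = diag(|a₀R|, …, |a_tR|)` and `Q` is as
in the theorem; moreover `Q_{ij} = 1 ↔ a_j R ⊆ (a_i R)⊥` and `Q` is symmetric. -/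
theorem stmt8 {R : Type*} [CommRing R] [Fintype R] (hR : IsFrobeniusRing R)
    {t : ℕ} (a : Fin (t + 1) → R)
    (hrep : ∀ r : R, ∃ i, Ideal.span {r} = Ideal.span {a i})
    (hinj : ∀ i j, Ideal.span {a i} = Ideal.span {a j} → i = j)
    {n : ℕ} (C : Submodule R (Fin n → R))
    (A D Q : Matrix (Fin (t + 1)) (Fin (t + 1)) ℚ)
    (hA : ∀ i j, A i j = if Ideal.span {a i} ≤ Ideal.span {a j} then 1 else 0)
    (hD : D = Matrix.diagonal fun i => (Nat.card (Ideal.span {a i}) : ℚ))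
    (hQ : ∀ i j, Q i j =
      if a i ≠ 0 ∧ ∃ k, a i * a k ≠ 0 ∧ Ideal.span {a k} ≤ Ideal.span {a j}
      then 0 else 1) :
    (∀ i j, Q i j = 1 ↔ ∀ r ∈ Ideal.span {a j}, a i * r = 0) ∧
    (∀ i j, Q i j = Q j i) ∧
    swe a (dualCode C) =
      MvPolynomial.C ((Nat.card C : ℚ)⁻¹) *
        (MvPolynomial.bind₁ (fun i : Fin (t + 1) =>
          ∑ j : Fin (t + 1), MvPolynomial.C ((Q * D * A⁻¹) i j) * X j)) (swe a C) := by
  have hQ' : ∀ i j, Q i j = if a i * a j = 0 then 1 else 0 := fun i j => by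
    simp only [hQ, ne_zero_and_exists_mul_ne_zero_iff, ite_not]
  refine ⟨fun i j => ?_, fun i j => by rw [hQ', hQ', mul_comm], ?_⟩
  · rw [hQ', forall_mem_span_singleton_mul_eq_zero_iff]
    split_ifs with h <;> simp [h]
  have hdetA : A.det = 1 := Matrix.det_eq_one_of_eq_ite_le (fun i j => hinj i j)
    (Set.ncard_strictMono.comp SetLike.coe_strictMono) hA
  have hC : (Nat.card C : ℚ) ≠ 0 := Nat.cast_ne_zero.2 Nat.card_pos.ne'
  change _ = _ * linearSubst (Q * D * A⁻¹) (swe a C)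
  rw [← linearSubst_linearSubst,
    ← card_mul_linearSubst_swe_dualCode hR a hrep hinj C A D Q hA hD hQ', map_mul, algHom_C,
    algebraMap_eq, ← mul_assoc, ← map_mul, inv_mul_cancel₀ hC, map_one, one_mul,
    linearSubst_linearSubst, Matrix.mul_nonsing_inv _ (hdetA ▸ isUnit_one), linearSubst_one]

end
end
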